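/- For any string S and index 1 ≤ i < |S|, and any position k ≥ 2 in the suffix S[i..]: PD(S[i..])[k] = k - 1 and PD(S[i+1..])[k-1] = 0 hold simultaneously if and only if PD(S[i+1..])[k-1] = 0 and S[i] ≤ S[i+k-1]. (Prepending a character converts exactly the zero positions with value ≥ S[i] into front pointers.) -/
import Mathlib


open List

inductive Shape where
  | nil : Shape
  | node : Shape → Shape → Shape
deriving DecidableEq

inductive BTree (α : Type*) where
  | nil : BTree α
  | node : BTree α → α → BTree α → BTree α

def BTree.shape {α : Type*} : BTree α → Shape
  | .nil => .nil
  | .node l _ r => .node l.shape r.shape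

def BTree.rootVal {α : Type*} : BTree α → Option α
  | .nil => none
  | .node _ v _ => some v

section
variable {α : Type*} [LinearOrder α] [Inhabited α]

/-- Parent-distance value at 1-based position `i` of `S`. -/
def pdVal (S : List α) (i : ℕ) : ℕ :=
  let J := (Finset.Ico 1 i).filter (fun j => S.getD (j-1) default ≤ S.getD (i-1) default)
  if h : J.Nonempty then i - J.max' h else 0

/-- Parent-distance encoding of `S` (1-based positions). -/
def PD (S : List α) : List ℕ := (List.range S.length).map (fun k => pdVal S (k+1))

/-- 0-based index of the leftmost minimum of `S`. -/
def leftmostMinIdx (S : List α) : ℕ :=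
  ((List.range S.length).argmin (fun j => S.getD j default)).getD 0

def CTaux : ℕ → List α → BTree α
  | 0, _ => .nil
  | (n+1), S =>
    if S.isEmpty then .nil else
      let i := leftmostMinIdx S
      .node (CTaux n (S.take i)) (S.getD i default) (CTaux n (S.drop (i+1)))

/-- The (labeled) Cartesian tree of `S`. -/
def CT (S : List α) : BTree α := CTaux S.length S

/-- Front pointers of a sequence `u` of naturals (1-based positions `k ≥ 2` with `k - u[k] = 1`). -/
def frontPointers (u : List ℕ) : Finset ℕ :=
  (Finset.Icc 2 u.length).filter (fun k => k - u.getD (k-1) 0 = 1)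

/-- `FP(S)[i]`: number of front pointers of `PD(S[i..])` (1-based `i`). -/
def FPval (S : List α) (i : ℕ) : ℕ := (frontPointers (PD (S.drop (i-1)))).card

/-- The FP encoding of `S`. -/
def FP (S : List α) : List ℕ := (List.range S.length).map (fun k => FPval S (k+1))

end

/-- Prepending `S[i]` turns exactly the zero positions of `PD(S[i+1..])` holding
values `≥ S[i]` into front pointers of `PD(S[i..])`. -/
theorem stmt6 {α : Type*} [LinearOrder α] [Inhabited α] (S : List α) (i : ℕ)
    (h1 : 1 ≤ i) (h2 : i < S.length) (k : ℕ) (hk1 : 2 ≤ k)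
    (hk2 : k ≤ (S.drop (i-1)).length) :
    (pdVal (S.drop (i-1)) k = k - 1 ∧ pdVal (S.drop i) (k-1) = 0) ↔
      (pdVal (S.drop i) (k-1) = 0 ∧
        S.getD (i-1) default ≤ S.getD (i+k-2) default) := by
  have hgd : ∀ m : ℕ, (S.drop (i-1)).getD m default = S.getD (i-1+m) default := fun m => by
    simp [List.getD_eq_getElem?_getD, List.getElem?_drop]
  have hgd' : ∀ m : ℕ, (S.drop i).getD m default = S.getD (i+m) default := fun m => by
    simp [List.getD_eq_getElem?_getD, List.getElem?_drop]
  set JT := (Finset.Ico 1 k).filter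
      (fun j => (S.drop (i-1)).getD (j-1) default ≤ (S.drop (i-1)).getD (k-1) default) with hJT
  set JU := (Finset.Ico 1 (k-1)).filter
      (fun j => (S.drop i).getD (j-1) default ≤ (S.drop i).getD (k-1-1) default) with hJU
  have corr : ∀ j, 1 ≤ j → (j ∈ JU ↔ j + 1 ∈ JT) := by
    intro j hj
    simp only [hJT, hJU, Finset.mem_filter, Finset.mem_Ico, hgd, hgd']
    have e1 : i - 1 + (j+1-1) = i + (j-1) := by omega
    have e2 : i - 1 + (k-1) = i + (k-1-1) := by omega
    rw [e1, e2]
    constructor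
    · rintro ⟨hb, hle⟩; exact ⟨⟨by omega, by omega⟩, hle⟩
    · rintro ⟨hb, hle⟩; exact ⟨⟨by omega, by omega⟩, hle⟩
  have h1mem : (1 ∈ JT) ↔ S.getD (i-1) default ≤ S.getD (i+k-2) default := by
    simp only [hJT, Finset.mem_filter, Finset.mem_Ico, hgd]
    have e0 : i - 1 + (1-1) = i - 1 := by omega
    have e : i - 1 + (k-1) = i + k - 2 := by omega
    rw [e0, e]
    constructor
    · rintro ⟨_, hle⟩; exact hle
    · intro hle; exact ⟨⟨le_refl 1, by omega⟩, hle⟩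
  have hU0 : pdVal (S.drop i) (k-1) = 0 ↔ JU = ∅ := by
    simp only [pdVal]
    rw [← hJU]
    split_ifs with h
    · refine iff_of_false ?_ ?_
      · have hm := Finset.mem_Ico.mp (Finset.mem_filter.mp (JU.max'_mem h)).1
        omega
      · exact Finset.nonempty_iff_ne_empty.mp h
    · exact iff_of_true rfl (Finset.not_nonempty_iff_eq_empty.mp h)
  have hT1 : pdVal (S.drop (i-1)) k = k - 1 ↔ (1 ∈ JT ∧ ∀ j ∈ JT, j = 1) := by
    simp only [pdVal]
    rw [← hJT]
    split_ifs with h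
    · have hm := JT.max'_mem h
      have hb : 1 ≤ JT.max' h ∧ JT.max' h < k :=
        Finset.mem_Ico.mp (Finset.mem_filter.mp hm).1
      constructor
      · intro he
        have hmax : JT.max' h = 1 := by omega
        refine ⟨hmax ▸ hm, fun j hj => ?_⟩
        have hle := JT.le_max' j hj
        have hjb : 1 ≤ j := (Finset.mem_Ico.mp (Finset.mem_filter.mp hj).1).1
        omega
      · rintro ⟨h1, hall⟩
        have := hall _ hm
        omega
    · refine iff_of_false (by omega) ?_
      rintro ⟨h1, -⟩
      exact h ⟨1, h1⟩
  rw [hU0, hT1]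
  constructor
  · rintro ⟨⟨h1, -⟩, hu⟩
    exact ⟨hu, h1mem.mp h1⟩
  · rintro ⟨hu, hle⟩
    refine ⟨⟨h1mem.mpr hle, ?_⟩, hu⟩
    intro j hj
    by_contra hne
    have hjb : 1 ≤ j := (Finset.mem_Ico.mp (Finset.mem_filter.mp hj).1).1
    have hmem : j - 1 ∈ JU := by
      apply (corr (j-1) (by omega)).mpr
      have e : j - 1 + 1 = j := by omega
      rw [e]; exact hj
    rw [hu] at hmem
    exact absurd hmem (Finset.notMem_empty _)
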